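/- arXiv:2509.14026 — 2 statements merged into one kernel-verified Lean document; each statement's English description precedes it below -/
import Mathlib

section
/- The output f_A(x) = ⟨0| U(x)† M U(x) |0⟩ of a single-qubit data re-uploading circuit with r un-weighted encoding layers S(x) = exp(-i x σ_z / 2) interleaved with arbitrary fixed 2×2 unitaries is a trigonometric polynomial of degree at most r: f_A(x) = Σ_{α=-r}^{r} c_α e^{iαx} for some complex coefficients c_α with c_{-α} = conj(c_α). -/
open Matrix

/-- 2×2 complex matrices (single-qubit operators). -/
abbrev M2 : Type := Matrix (Fin 2) (Fin 2) ℂ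

/-- The un-weighted data encoding gate `S(x) = exp(-i x σ_z / 2) = diag(e^{-ix/2}, e^{ix/2})`. -/
noncomputable def Sz (x : ℝ) : M2 :=
  !![Complex.exp (-(Complex.I * x / 2)), 0; 0, Complex.exp (Complex.I * x / 2)]

/-- The data re-uploading circuit `U(x) = W^{(r+1)} S(x) W^{(r)} ⋯ S(x) W^{(1)}`. -/
noncomputable def reupload (S : ℝ → M2) : (r : ℕ) → (Fin (r + 1) → M2) → ℝ → M2
  | 0, W, _ => W 0
  | r + 1, W, x => W (Fin.last (r + 1)) * S x * reupload S r (fun i => W i.castSucc) x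

noncomputable def P0 : M2 := !![1,0;0,0]
noncomputable def P1 : M2 := !![0,0;0,1]

lemma Sz_eq (x : ℝ) :
    Sz x = Complex.exp (-(Complex.I * x / 2)) • P0 + Complex.exp (Complex.I * x / 2) • P1 := by
  ext i j
  fin_cases i <;> fin_cases j <;> simp [Sz, P0, P1]

lemma reupload_expand (r : ℕ) (W : Fin (r + 1) → M2) :
    ∃ A : ℕ → M2, (∀ k, r + 1 ≤ k → A k = 0) ∧
      ∀ x : ℝ, reupload Sz r W x =
        ∑ k ∈ Finset.range (r + 1),
          Complex.exp (Complex.I * x * ((k : ℂ) - r / 2)) • A k := by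
  induction r with
  | zero =>
    refine ⟨fun k => if k = 0 then W 0 else 0, ?_, ?_⟩
    · intro k hk
      have : k ≠ 0 := by omega
      simp [this]
    · intro x
      simp [reupload]
  | succ r ih =>
    obtain ⟨A, hA0, hA⟩ := ih (fun i => W i.castSucc)
    set WL := W (Fin.last (r + 1)) with hWL
    refine ⟨fun k => WL * P0 * A k + WL * P1 * (if k = 0 then 0 else A (k - 1)), ?_, ?_⟩
    · intro k hk
      have h1 : A k = 0 := hA0 k (by omega)
      have h2 : A (k - 1) = 0 := hA0 (k - 1) (by omega)
      have hk0 : k ≠ 0 := by omega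
      simp [h1, h2, hk0]
    · intro x
      have key : ∀ k : ℕ,
          Complex.exp (Complex.I * x * ((k : ℂ) - r / 2)) • (WL * Sz x * A k)
            = Complex.exp (Complex.I * x * ((k : ℂ) - (r + 1 : ℕ) / 2)) • (WL * P0 * A k)
              + Complex.exp (Complex.I * x * (((k + 1 : ℕ) : ℂ) - (r + 1 : ℕ) / 2)) • (WL * P1 * A k) := by
        intro k
        rw [Sz_eq]
        rw [mul_add, add_mul, Matrix.mul_smul, Matrix.mul_smul, Matrix.smul_mul, Matrix.smul_mul,
          smul_add, smul_smul, smul_smul, ← Complex.exp_add, ← Complex.exp_add]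
        congr 2
        · push_cast; ring_nf
        · push_cast; ring_nf
      have lhs : reupload Sz (r + 1) W x
          = ∑ k ∈ Finset.range (r + 1),
              Complex.exp (Complex.I * x * ((k : ℂ) - r / 2)) • (WL * Sz x * A k) := by
        show WL * Sz x * reupload Sz r (fun i => W i.castSucc) x = _
        rw [hA x, Finset.mul_sum]
        refine Finset.sum_congr rfl fun k _ => ?_
        rw [Matrix.mul_smul]
      rw [lhs]
      simp only [key]
      rw [Finset.sum_add_distrib]
      have rhsplit : ∀ k : ℕ,
          Complex.exp (Complex.I * x * ((k : ℂ) - (↑(r + 1) : ℂ) / 2)) •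
              (WL * P0 * A k + WL * P1 * (if k = 0 then 0 else A (k - 1)))
            = Complex.exp (Complex.I * x * ((k : ℂ) - (↑(r + 1) : ℂ) / 2)) • (WL * P0 * A k)
              + Complex.exp (Complex.I * x * ((k : ℂ) - (↑(r + 1) : ℂ) / 2)) •
                  (WL * P1 * (if k = 0 then 0 else A (k - 1))) := fun k => smul_add _ _ _
      simp only [rhsplit]
      rw [Finset.sum_add_distrib]
      congr 1
      · -- P0 part: extend range (r+1) to range (r+2), last term vanishes
        rw [Finset.sum_range_succ (n := r + 1)]
        rw [hA0 (r + 1) le_rfl]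
        simp
      · -- P1 part: shift index
        rw [Finset.sum_range_succ' (n := r + 1)]
        simp only [Nat.add_eq_zero, and_false, if_false, Nat.add_sub_cancel,
          if_true, mul_zero, smul_zero, add_zero, eq_self_iff_true, if_pos]
        simp

lemma conj_exp_freq (x : ℝ) (k r : ℕ) :
    (starRingEnd ℂ) (Complex.exp (Complex.I * x * ((k : ℂ) - r / 2)))
      = Complex.exp (-(Complex.I * x * ((k : ℂ) - r / 2))) := by
  rw [← Complex.exp_conj]
  congr 1
  simp only [_root_.map_mul, map_sub, map_div₀, Complex.conj_I, Complex.conj_ofReal,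
    map_natCast, map_ofNat]
  ring

/-- The output `f_A(x) = ⟨0|U(x)† M U(x)|0⟩` of a single-qubit data re-uploading circuit
with `r` un-weighted encoding layers interleaved with fixed unitaries is a trigonometric
polynomial of degree at most `r`, with conjugate-symmetric coefficients. -/
theorem reupload_is_trig_poly (r : ℕ) (W : Fin (r + 1) → M2)
    (hW : ∀ ℓ, W ℓ ∈ Matrix.unitaryGroup (Fin 2) ℂ)
    (M : M2) (hM : M.IsHermitian) :
    ∃ c : ℤ → ℂ, (∀ α : ℤ, c (-α) = (starRingEnd ℂ) (c α)) ∧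
      ∀ x : ℝ,
        ((reupload Sz r W x)ᴴ * M * reupload Sz r W x) 0 0 =
          ∑ α ∈ Finset.Icc (-(r : ℤ)) (r : ℤ), c α * Complex.exp (Complex.I * α * x) := by
  obtain ⟨A, hA0, hA⟩ := reupload_expand r W
  set B : ℕ → ℕ → ℂ := fun k l => ((A k)ᴴ * M * A l) 0 0 with hB
  have hBconj : ∀ k l, (starRingEnd ℂ) (B k l) = B l k := by
    intro k l
    have : (starRingEnd ℂ) (((A k)ᴴ * M * A l) 0 0) = (((A k)ᴴ * M * A l)ᴴ) 0 0 := by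
      simp [Matrix.conjTranspose_apply]
    rw [hB]
    simp only [this]
    rw [Matrix.conjTranspose_mul, Matrix.conjTranspose_mul, Matrix.conjTranspose_conjTranspose,
      hM.eq, mul_assoc]
  refine ⟨fun α => ∑ k ∈ Finset.range (r + 1), ∑ l ∈ Finset.range (r + 1),
      if (l : ℤ) - k = α then B k l else 0, ?_, ?_⟩
  · intro α
    rw [map_sum]
    simp only [map_sum]
    rw [Finset.sum_comm]
    refine Finset.sum_congr rfl fun k _ => Finset.sum_congr rfl fun l _ => ?_
    rw [apply_ite (starRingEnd ℂ), map_zero, hBconj]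
    refine if_congr ?_ rfl rfl
    omega
  · intro x
    rw [hA x]
    -- LHS expansion
    rw [Matrix.conjTranspose_sum]
    simp only [Matrix.conjTranspose_smul]
    rw [Finset.sum_mul, Finset.sum_mul]
    simp only [Matrix.smul_mul, Finset.mul_sum, Matrix.mul_smul, smul_smul,
      Matrix.sum_apply, Matrix.smul_apply, smul_eq_mul]
    -- RHS: push sums
    have hmem : ∀ k ∈ Finset.range (r + 1), ∀ l ∈ Finset.range (r + 1),
        (l : ℤ) - k ∈ Finset.Icc (-(r : ℤ)) (r : ℤ) := by
      intro k hk l hl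
      rw [Finset.mem_range] at hk hl
      rw [Finset.mem_Icc]
      omega
    have hrhs : ∑ α ∈ Finset.Icc (-(r : ℤ)) (r : ℤ),
          (∑ k ∈ Finset.range (r + 1), ∑ l ∈ Finset.range (r + 1),
            if (l : ℤ) - k = α then B k l else 0) * Complex.exp (Complex.I * α * x)
        = ∑ k ∈ Finset.range (r + 1), ∑ l ∈ Finset.range (r + 1),
            B k l * Complex.exp (Complex.I * (((l : ℤ) - k : ℤ) : ℂ) * x) := by
      simp only [Finset.sum_mul, ite_mul, zero_mul]
      rw [Finset.sum_comm]
      refine Finset.sum_congr rfl fun k hk => ?_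
      rw [Finset.sum_comm]
      refine Finset.sum_congr rfl fun l hl => ?_
      rw [Finset.sum_ite_eq, if_pos (hmem k hk l hl)]
    rw [hrhs]
    refine Finset.sum_congr rfl fun k hk => Finset.sum_congr rfl fun l hl => ?_
    have hstar : star (Complex.exp (Complex.I * x * ((k : ℂ) - r / 2)))
        = Complex.exp (-(Complex.I * x * ((k : ℂ) - r / 2))) := conj_exp_freq x k r
    rw [hstar, ← Complex.exp_add]
    rw [show ((A k)ᴴ * M * A l) 0 0 = B k l from rfl, mul_comm]
    congr 2
    push_cast
    ring
end

section
/- For a single-qubit data re-uploading circuit with r un-weighted layers, the set of frequencies appearing in f_A, namely Ω_A = {Λ_k - Λ_j : k, j ∈ {1,2}^r} where Λ_j = Σ_ℓ λ_{j_ℓ} with λ_1 = 1/2, λ_2 = -1/2, equals the set of integers {-r, -(r-1), …, r-1, r}; in particular the number of distinct non-zero frequencies is exactly 2r. -/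
lemma lam_eq (r : ℕ) (j : Fin r → Fin 2) :
    (∑ ℓ, (if j ℓ = 0 then (1 : ℝ) / 2 else -(1 / 2)))
      = ((Finset.univ.filter (fun ℓ => j ℓ = 0)).card : ℝ) - r / 2 := by
  rw [← Finset.sum_filter_add_sum_filter_not Finset.univ (fun ℓ => j ℓ = 0)]
  rw [Finset.sum_congr rfl (fun x hx => if_pos (Finset.mem_filter.mp hx).2),
      Finset.sum_congr rfl (fun x hx => if_neg (Finset.mem_filter.mp hx).2)]
  rw [Finset.sum_const, Finset.sum_const, nsmul_eq_mul, nsmul_eq_mul]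
  have h : (Finset.univ.filter (fun ℓ => j ℓ = 0)).card
      + (Finset.univ.filter (fun ℓ => ¬ j ℓ = 0)).card = r := by
    rw [Finset.card_filter_add_card_filter_not, Finset.card_univ, Fintype.card_fin]
  have h2 := congrArg (Nat.cast : ℕ → ℝ) h
  push_cast at h2
  linarith

lemma exists_count (r n : ℕ) (hn : n ≤ r) :
    ∃ j : Fin r → Fin 2, (Finset.univ.filter (fun ℓ => j ℓ = 0)).card = n := by
  refine ⟨fun ℓ => if (ℓ : ℕ) < n then 0 else 1, ?_⟩
  have h1 : (Finset.univ.filter (fun ℓ : Fin r => (if (ℓ : ℕ) < n then (0 : Fin 2) else 1) = 0))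
      = (Finset.range n).attachFin (fun m hm => lt_of_lt_of_le (Finset.mem_range.mp hm) hn) := by
    ext x
    by_cases h : (x : ℕ) < n <;> simp [Finset.mem_attachFin, h]
  rw [h1, Finset.card_attachFin, Finset.card_range]

/-- For a single-qubit data re-uploading circuit with `r` un-weighted layers, the
frequency set `Ω_A = {Λ_k - Λ_j}`, where `Λ_j = Σ_ℓ λ_{j_ℓ}` with eigenvalues
`λ_1 = 1/2`, `λ_2 = -1/2` of the generator `H = σ_z/2`, equals the set of integers
`{-r, …, r}`; in particular the number of distinct non-zero frequencies is `2r`. -/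
theorem reupload_frequency_set (r : ℕ) :
    (let Λ : (Fin r → Fin 2) → ℝ := fun j => ∑ ℓ, (if j ℓ = 0 then (1 : ℝ) / 2 else -(1 / 2));
     let ΩA : Set ℝ := {d | ∃ kk jj : Fin r → Fin 2, d = Λ kk - Λ jj};
     ΩA = {d : ℝ | ∃ z : ℤ, d = (z : ℝ) ∧ |z| ≤ (r : ℤ)} ∧
       (ΩA \ {0}).ncard = 2 * r) := by
  intro Λ ΩA
  have hΩ : ΩA = {d : ℝ | ∃ z : ℤ, d = (z : ℝ) ∧ |z| ≤ (r : ℤ)} := by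
    ext d
    constructor
    · rintro ⟨kk, jj, rfl⟩
      refine ⟨((Finset.univ.filter (fun ℓ => kk ℓ = 0)).card : ℤ)
        - ((Finset.univ.filter (fun ℓ => jj ℓ = 0)).card : ℤ), ?_, ?_⟩
      · show Λ kk - Λ jj = _
        simp only [Λ, lam_eq]
        push_cast
        ring
      · have h1 : (Finset.univ.filter (fun ℓ => kk ℓ = 0)).card ≤ r := by
          simpa using Finset.card_filter_le Finset.univ (fun ℓ => kk ℓ = 0)
        have h2 : (Finset.univ.filter (fun ℓ => jj ℓ = 0)).card ≤ r := by
          simpa using Finset.card_filter_le Finset.univ (fun ℓ => jj ℓ = 0)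
        rw [abs_le]
        omega
    · rintro ⟨z, rfl, hz⟩
      rw [abs_le] at hz
      rcases le_or_gt 0 z with hp | hn
      · obtain ⟨kk, hkk⟩ := exists_count r z.toNat (by omega)
        obtain ⟨jj, hjj⟩ := exists_count r 0 (by omega)
        refine ⟨kk, jj, ?_⟩
        show _ = Λ kk - Λ jj
        simp only [Λ, lam_eq, hkk, hjj]
        have hz' : (z.toNat : ℤ) = z := Int.toNat_of_nonneg hp
        have : ((z.toNat : ℕ) : ℝ) = (z : ℝ) := by exact_mod_cast hz'
        push_cast at this ⊢
        linarith
      · obtain ⟨jj, hjj⟩ := exists_count r (-z).toNat (by omega)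
        obtain ⟨kk, hkk⟩ := exists_count r 0 (by omega)
        refine ⟨kk, jj, ?_⟩
        show _ = Λ kk - Λ jj
        simp only [Λ, lam_eq, hkk, hjj]
        have hz' : ((-z).toNat : ℤ) = -z := Int.toNat_of_nonneg (by omega)
        have : (((-z).toNat : ℕ) : ℝ) = ((-z : ℤ) : ℝ) := by exact_mod_cast hz'
        push_cast at this ⊢
        linarith
  refine ⟨hΩ, ?_⟩
  have hΩ2 : ΩA = (fun z : ℤ => (z : ℝ)) '' (Set.Icc (-(r : ℤ)) r) := by
    rw [hΩ]; ext d
    simp only [Set.mem_setOf_eq, Set.mem_image, Set.mem_Icc, abs_le]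
    constructor
    · rintro ⟨z, rfl, h⟩; exact ⟨z, h, rfl⟩
    · rintro ⟨z, h, rfl⟩; exact ⟨z, rfl, h⟩
  have hinj : Function.Injective (fun z : ℤ => (z : ℝ)) := Int.cast_injective
  have hd : ΩA \ {0} = (fun z : ℤ => (z : ℝ)) '' (Set.Icc (-(r : ℤ)) r \ {0}) := by
    rw [hΩ2, Set.image_diff hinj, Set.image_singleton]
    norm_num
  rw [hd, Set.ncard_image_of_injective _ hinj]
  have hfin : (Set.Icc (-(r : ℤ)) r \ {0}) = ↑((Finset.Icc (-(r : ℤ)) r).erase 0) := by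
    ext z; simp [and_comm]
  rw [hfin, Set.ncard_coe_finset, Finset.card_erase_of_mem (by simp), Int.card_Icc]
  simp
  omega
end
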